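/- arXiv:2603.01967 — 2 statements merged into one kernel-verified Lean document; each statement's English description precedes it below -/
import Mathlib

section
/- Let G be a graph, X ⊆ V(G), and (X₁, X₂, …, X_k) a simplicial decomposition of G[X]. Then G[X] is perfect if and only if G[X₁] is perfect. -/
open SimpleGraph

variable {V : Type}

/-- The clique number of the subgraph of `G` induced on `S`. -/
noncomputable def omegaOn (G : SimpleGraph V) (S : Set V) : ℕ :=
  sSup {n | ∃ s : Finset V, ↑s ⊆ S ∧ G.IsNClique n s}

/-- The subgraph of `G` induced on `S` is a perfect graph. -/
def IsPerfectOn (G : SimpleGraph V) (S : Set V) : Prop :=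
  ∀ T : Set V, T ⊆ S → (G.induce T).chromaticNumber = (omegaOn G T : ℕ∞)

/-- Every nonempty induced subgraph of `G[S]` admits a perfect division. -/
def PerfDivOn (G : SimpleGraph V) (S : Set V) : Prop :=
  ∀ H : Set V, H ⊆ S → H.Nonempty →
    ∃ A B : Set V, A ∪ B = H ∧ Disjoint A B ∧
      IsPerfectOn G A ∧ omegaOn G B < omegaOn G H

/-- `G` is minimally nonperfectly divisible. -/
def MNPD (G : SimpleGraph V) : Prop :=
  ¬ PerfDivOn G Set.univ ∧ ∀ S : Set V, S ≠ Set.univ → PerfDivOn G S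

/-- The external neighbourhood `N(X)`. -/
def extNbhd (G : SimpleGraph V) (X : Set V) : Set V :=
  {v | v ∉ X ∧ ∃ x ∈ X, G.Adj v x}

/-!
If `T ⊆ S` is not contained in `X 0`, any vertex of `T` in the last block `X i` meeting `T` is
simplicial in `G[T]`: with its neighbours in `T` it forms a clique, so these neighbours are fewer
than `ω(T)` and use fewer than `ω(T)` colours. Hence an `ω(T)`-colouring of `T` minus that vertex,
given by induction, extends to `T`, and perfection of `G[X 0]` propagates to `G[S]`.
-/

section CliqueNumber

variable [Finite V] {G : SimpleGraph V}

lemma bddAbove_cliqueSizes (G : SimpleGraph V) (T : Set V) :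
    BddAbove {n | ∃ s : Finset V, ↑s ⊆ T ∧ G.IsNClique n s} := by
  have := Fintype.ofFinite V
  refine ⟨Fintype.card V, ?_⟩
  rintro n ⟨s, -, hs⟩
  rw [← hs.card_eq]
  exact s.card_le_univ

lemma le_omegaOn {T : Set V} {n : ℕ} {s : Finset V} (hsT : ↑s ⊆ T) (hs : G.IsNClique n s) :
    n ≤ omegaOn G T :=
  le_csSup (bddAbove_cliqueSizes G T) ⟨s, hsT, hs⟩

lemma exists_isNClique_omegaOn (G : SimpleGraph V) (T : Set V) :
    ∃ s : Finset V, ↑s ⊆ T ∧ G.IsNClique (omegaOn G T) s :=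
  Nat.sSup_mem (s := {n | ∃ t : Finset V, (t : Set V) ⊆ T ∧ G.IsNClique n t})
    ⟨0, ∅, by simp, by simp⟩ (bddAbove_cliqueSizes G T)

lemma omegaOn_mono {T T' : Set V} (h : T' ⊆ T) : omegaOn G T' ≤ omegaOn G T := by
  obtain ⟨s, hsT', hs⟩ := exists_isNClique_omegaOn G T'
  exact le_omegaOn (hsT'.trans h) hs

lemma SimpleGraph.IsClique.encard_le_omegaOn {T s : Set V} (hs : G.IsClique s) (hsT : s ⊆ T) :
    s.encard ≤ omegaOn G T := by
  have hfin := s.toFinite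
  rw [← hfin.coe_toFinset, Set.encard_coe_eq_coe_finsetCard, Nat.cast_le]
  exact le_omegaOn (by simpa using hsT) ⟨by simpa using hs, rfl⟩

lemma omegaOn_le_of_colorable {T : Set V} {n : ℕ} (hT : (G.induce T).Colorable n) :
    omegaOn G T ≤ n := by
  obtain ⟨s, hsT, hs⟩ := exists_isNClique_omegaOn G T
  have := hT.card_le_of_pairwise_adj (fun x : s ↦ (⟨x, hsT x.2⟩ : T))
    fun x y hxy ↦ hs.isClique x.2 y.2 (Subtype.coe_ne_coe.mpr hxy)
  rwa [Nat.card_eq_fintype_card, Fintype.card_coe, hs.card_eq] at this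

lemma isPerfectOn_iff_forall_colorable {S : Set V} :
    IsPerfectOn G S ↔ ∀ T ⊆ S, (G.induce T).Colorable (omegaOn G T) := by
  refine forall₂_congr fun T _ ↦ ⟨fun h ↦ chromaticNumber_le_iff_colorable.mp h.le, fun h ↦ ?_⟩
  exact le_antisymm h.chromaticNumber_le
    (le_chromaticNumber_iff_colorable.mpr fun _ ↦ by exact_mod_cast omegaOn_le_of_colorable)

end CliqueNumber

lemma IsPerfectOn.mono {G : SimpleGraph V} {S S' : Set V} (h : IsPerfectOn G S) (hS' : S' ⊆ S) :
    IsPerfectOn G S' :=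
  fun T hT ↦ h T (hT.trans hS')

lemma SimpleGraph.Colorable.of_induce_diff_singleton {G : SimpleGraph V} {T : Set V} {v : V}
    {n : ℕ} (hT : (G.induce (T \ {v})).Colorable n) (hv : (G.neighborSet v ∩ T).encard < n) :
    (G.induce T).Colorable n := by
  classical
  obtain ⟨C⟩ := hT
  have hn : 0 < n := by exact_mod_cast (zero_le).trans_lt hv
  let c : V → Fin n := fun z ↦ if hz : z ∈ T \ {v} then C ⟨z, hz⟩ else ⟨0, hn⟩
  obtain ⟨a, ha⟩ : ∃ a, a ∉ c '' (G.neighborSet v ∩ T) := by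
    rw [← Set.ne_univ_iff_exists_notMem]
    refine ne_of_apply_ne Set.encard (((Set.encard_image_le _ _).trans_lt hv).trans_eq ?_).ne
    simp
  refine ⟨.mk (fun x ↦ Function.update c v a x) fun {x y} hxy ↦ ?_⟩
  have hxy' : G.Adj x y := hxy
  by_cases hx : (x : V) = v <;> by_cases hy : (y : V) = v
  · exact absurd (hx ▸ hy ▸ hxy') G.irrefl
  · rw [Function.update_of_ne hy, hx, Function.update_self]
    exact fun h ↦ ha ⟨y, ⟨hx ▸ hxy', y.2⟩, h.symm⟩
  · rw [Function.update_of_ne hx, hy, Function.update_self]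
    exact fun h ↦ ha ⟨x, ⟨hy ▸ hxy'.symm, x.2⟩, h⟩
  · rw [Function.update_of_ne hx, Function.update_of_ne hy]
    simp only [c, dif_pos (show (x : V) ∈ T \ {v} from ⟨x.2, hx⟩),
      dif_pos (show (y : V) ∈ T \ {v} from ⟨y.2, hy⟩)]
    exact C.valid hxy

lemma encard_neighborSet_inter_lt_omegaOn [Finite V] {G : SimpleGraph V} {T : Set V} {v : V}
    (hvT : v ∈ T) (hv : G.IsClique (G.neighborSet v ∩ T)) :
    (G.neighborSet v ∩ T).encard < omegaOn G T := by
  have hvN : v ∉ G.neighborSet v ∩ T := fun h ↦ G.irrefl h.1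
  calc (G.neighborSet v ∩ T).encard
      < (insert v (G.neighborSet v ∩ T)).encard :=
        (Set.toFinite _).encard_lt_encard (Set.ssubset_insert hvN)
    _ ≤ omegaOn G T :=
        (hv.insert fun _ hu _ ↦ hu.1).encard_le_omegaOn
          (Set.insert_subset hvT Set.inter_subset_right)

lemma isPerfectOn_of_forall_exists_simplicial [Finite V] {G : SimpleGraph V} {A S : Set V}
    (hA : IsPerfectOn G A)
    (hS : ∀ T ⊆ S, ¬ T ⊆ A → ∃ v ∈ T, G.IsClique (G.neighborSet v ∩ T)) :
    IsPerfectOn G S := by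
  rw [isPerfectOn_iff_forall_colorable] at hA ⊢
  intro T
  induction T using WellFoundedLT.induction with
  | _ T ih =>
    intro hTS
    by_cases hTA : T ⊆ A
    · exact hA T hTA
    obtain ⟨v, hvT, hv⟩ := hS T hTS hTA
    have hrest := ih (T \ {v}) (Set.sdiff_singleton_ssubset.mpr hvT) (Set.sdiff_subset.trans hTS)
    exact (hrest.mono (omegaOn_mono Set.sdiff_subset)).of_induce_diff_singleton
      (encard_neighborSet_inter_lt_omegaOn hvT hv)

lemma exists_last_index_meeting {X : ℕ → Set V} {k : ℕ} {T : Set V} (hT : T ⊆ ⋃ i < k, X i)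
    (hT0 : ¬ T ⊆ X 0) :
    ∃ i, i + 1 < k ∧ (X (i + 1) ∩ T).Nonempty ∧ T ⊆ ⋃ j ≤ i + 1, X j := by
  classical
  have hindex : ∀ t ∈ T, ∃ j < k, t ∈ X j := fun t ht ↦ by simpa using hT ht
  obtain ⟨t, htT, ht0⟩ := Set.not_subset.mp hT0
  obtain ⟨j, hjk, htj⟩ := hindex t htT
  set i := Nat.findGreatest (fun j ↦ (X j ∩ T).Nonempty) (k - 1)
  have hle : ∀ s ∈ T, ∀ l < k, s ∈ X l → l ≤ i := fun s hs l hlk hsl ↦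
    Nat.le_findGreatest (P := fun j ↦ (X j ∩ T).Nonempty) (by omega) ⟨s, hsl, hs⟩
  have hik : i ≤ k - 1 := Nat.findGreatest_le _
  have hji := hle t htT j hjk htj
  have hj0 : j ≠ 0 := by rintro rfl; exact ht0 htj
  refine ⟨i - 1, by omega, ?_, fun s hs ↦ ?_⟩
  · rw [Nat.sub_add_cancel (by omega)]
    exact Nat.findGreatest_spec (P := fun j ↦ (X j ∩ T).Nonempty) (by omega) ⟨t, htj, htT⟩
  · obtain ⟨l, hlk, hsl⟩ := hindex s hs
    exact Set.mem_biUnion (show l ≤ i - 1 + 1 by have := hle s hs l hlk hsl; omega) hsl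

theorem stmt_3_general [Fintype V] (G : SimpleGraph V) (S : Set V) (k : ℕ) (hk : 1 ≤ k)
    (X : ℕ → Set V)
    (hUnion : (⋃ i < k, X i) = S)
    (hSimp : ∀ i, i + 1 < k → ∀ x ∈ X (i + 1),
      G.IsClique {z | z ∈ (⋃ j ≤ i + 1, X j) ∧ G.Adj x z}) :
    IsPerfectOn G S ↔ IsPerfectOn G (X 0) := by
  subst hUnion
  refine ⟨fun h ↦ h.mono (Set.subset_biUnion_of_mem (u := X) hk), fun h0 ↦ ?_⟩
  refine isPerfectOn_of_forall_exists_simplicial h0 fun T hT hT0 ↦ ?_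
  obtain ⟨i, hik, ⟨v, hvX, hvT⟩, hTi⟩ := exists_last_index_meeting hT hT0
  refine ⟨v, hvT, (hSimp i hik v hvX).subset ?_⟩
  exact fun z hz ↦ ⟨hTi hz.2, hz.1⟩

theorem stmt_3 [Fintype V] (G : SimpleGraph V) (S : Set V) (k : ℕ) (hk : 1 ≤ k)
    (X : ℕ → Set V)
    (hUnion : (⋃ i < k, X i) = S)
    (hDisj : ∀ i < k, ∀ j < k, i ≠ j → Disjoint (X i) (X j))
    (hSimp : ∀ i, i + 1 < k → ∀ x ∈ X (i + 1),
      G.IsClique {z | z ∈ (⋃ j ≤ i + 1, X j) ∧ G.Adj x z}) :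
    IsPerfectOn G S ↔ IsPerfectOn G (X 0) :=
  stmt_3_general G S k hk X hUnion hSimp
end

section
/- Let G be a minimally nonperfectly divisible graph with a clique cutset X, with V(G) \ X = V₁ ∪ V₂ nonempty and anticomplete, and G_i = G[X ∪ V_i] for i = 1,2. Then neither G₁ nor G₂ is perfect. -/
set_option maxHeartbeats 1000000


open SimpleGraph

variable {V : Type}

section lems
variable [Fintype V] (G : SimpleGraph V)

lemma omegaSet_bdd (S : Set V) :
    BddAbove {n | ∃ s : Finset V, ↑s ⊆ S ∧ G.IsNClique n s} :=
  ⟨Fintype.card V, fun n ⟨s, _, hs⟩ => hs.2 ▸ s.card_le_univ⟩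

lemma omegaSet_ne (S : Set V) :
    Set.Nonempty {n | ∃ s : Finset V, ↑s ⊆ S ∧ G.IsNClique n s} :=
  ⟨0, ∅, by simp, by simp [SimpleGraph.IsNClique]⟩

lemma clique_le_omega {S : Set V} {n : ℕ} {s : Finset V} (hs : ↑s ⊆ S)
    (h : G.IsNClique n s) : n ≤ omegaOn G S :=
  le_csSup (omegaSet_bdd G S) ⟨s, hs, h⟩

lemma omega_mono {S T : Set V} (h : S ⊆ T) : omegaOn G S ≤ omegaOn G T :=
  csSup_le_csSup (omegaSet_bdd G T) (omegaSet_ne G S)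
    (fun n ⟨s, hs, hc⟩ => ⟨s, hs.trans h, hc⟩)

lemma omega_empty : omegaOn G (∅ : Set V) = 0 := by
  refine le_antisymm (csSup_le (omegaSet_ne G _) ?_) (Nat.zero_le _)
  rintro n ⟨s, hs, hc⟩
  have : s = ∅ := by
    ext x; simp only [Finset.notMem_empty, iff_false]
    intro hx
    exact absurd (hs hx) (Set.notMem_empty x)
  simp [this] at hc
  omega

lemma omega_pos {S : Set V} (h : S.Nonempty) : 1 ≤ omegaOn G S := by
  obtain ⟨v, hv⟩ := h
  exact clique_le_omega G (s := {v}) (by simpa) (by simp)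

lemma exists_omega_clique (S : Set V) :
    ∃ s : Finset V, ↑s ⊆ S ∧ G.IsNClique (omegaOn G S) s :=
  Nat.sSup_mem (omegaSet_ne G S) (omegaSet_bdd G S)

lemma omega_le_chromatic (T : Set V) :
    (omegaOn G T : ℕ∞) ≤ (G.induce T).chromaticNumber := by
  classical
  obtain ⟨s, hsT, hs⟩ := exists_omega_clique G T
  have hcl : (G.induce T).IsClique ((s.subtype (· ∈ T)) : Finset T) := by
    intro x hx y hy hxy
    rw [Finset.mem_coe, Finset.mem_subtype] at hx hy
    exact hs.1 hx hy (fun h => hxy (Subtype.ext h))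
  have hcard : (s.subtype (· ∈ T)).card = omegaOn G T := by
    rw [Finset.card_subtype, Finset.filter_true_of_mem (fun x hx => hsT hx), hs.2]
  have := hcl.card_le_chromaticNumber
  rwa [hcard] at this
end lems

lemma exists_perm_match {n : ℕ} {K : Type} (f g : K → Fin n)
    (hf : Function.Injective f) (hg : Function.Injective g) :
    ∃ σ : Equiv.Perm (Fin n), ∀ y, σ (g y) = f y := by
  classical
  refine ⟨((Equiv.ofInjective g hg).symm.trans (Equiv.ofInjective f hf)).extendSubtype, ?_⟩
  intro y
  rw [Equiv.extendSubtype_apply_of_mem _ (g y) ⟨y, rfl⟩]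
  have h2 : (⟨g y, ⟨y, rfl⟩⟩ : {x // x ∈ Set.range g}) = Equiv.ofInjective g hg y :=
    Subtype.ext rfl
  rw [h2, Equiv.trans_apply, Equiv.symm_apply_apply]
  rfl

lemma glue_perfect [Fintype V] (G : SimpleGraph V) (P Q : Set V)
    (hP : IsPerfectOn G P) (hQ : IsPerfectOn G Q)
    (hK : G.IsClique (P ∩ Q))
    (hE : ∀ u ∈ P \ Q, ∀ v ∈ Q \ P, ¬ G.Adj u v) :
    IsPerfectOn G (P ∪ Q) := by
  classical
  intro T hT
  set k := omegaOn G T with hk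
  refine le_antisymm ?_ (omega_le_chromatic G T)
  -- construct a coloring of induce T with k colors
  have hT1 : T ∩ P ⊆ P := Set.inter_subset_right
  have hT2 : T ∩ Q ⊆ Q := Set.inter_subset_right
  have hk1 : omegaOn G (T ∩ P) ≤ k := omega_mono G Set.inter_subset_left
  have hk2 : omegaOn G (T ∩ Q) ≤ k := omega_mono G Set.inter_subset_left
  have hc1 : (G.induce (T ∩ P)).Colorable k := by
    rw [← chromaticNumber_le_iff_colorable, hP _ hT1]
    exact_mod_cast hk1
  have hc2 : (G.induce (T ∩ Q)).Colorable k := by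
    rw [← chromaticNumber_le_iff_colorable, hQ _ hT2]
    exact_mod_cast hk2
  obtain ⟨c1⟩ := hc1
  obtain ⟨c2⟩ := hc2
  -- the clique on which to match
  set K : Set V := T ∩ (P ∩ Q) with hKdef
  have hKP : K ⊆ T ∩ P := fun x hx => ⟨hx.1, hx.2.1⟩
  have hKQ : K ⊆ T ∩ Q := fun x hx => ⟨hx.1, hx.2.2⟩
  let f : K → Fin k := fun x => c1 ⟨x.1, hKP x.2⟩
  let g : K → Fin k := fun x => c2 ⟨x.1, hKQ x.2⟩
  have hf : Function.Injective f := by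
    intro x y hxy
    by_contra hne
    have hadj : G.Adj x.1 y.1 := hK x.2.2 y.2.2 (fun h => hne (Subtype.ext h))
    exact c1.valid (by exact hadj) hxy
  have hg : Function.Injective g := by
    intro x y hxy
    by_contra hne
    have hadj : G.Adj x.1 y.1 := hK x.2.2 y.2.2 (fun h => hne (Subtype.ext h))
    exact c2.valid (by exact hadj) hxy
  obtain ⟨σ, hσ⟩ := exists_perm_match f g hf hg
  -- define the coloring
  have color : (G.induce T).Coloring (Fin k) := by
    refine Coloring.mk
      (fun v => if h : v.1 ∈ P then c1 ⟨v.1, ⟨v.2, h⟩⟩ else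
        σ (c2 ⟨v.1, ⟨v.2, ?_⟩⟩)) ?_
    · rcases hT v.2 with h' | h'
      · exact absurd h' h
      · exact h'
    · rintro ⟨u, hu⟩ ⟨v, hv⟩ hadj heq
      simp only [comap_adj, Function.Embedding.coe_subtype] at hadj
      by_cases hup : u ∈ P <;> by_cases hvp : v ∈ P
      · simp only [hup, hvp, dif_pos] at heq
        exact c1.valid (by exact hadj) heq
      · -- u ∈ P, v ∉ P so v ∈ Q; u must be in Q too
        have hvq : v ∈ Q := (hT hv).resolve_left hvp
        have huq : u ∈ Q := by
          by_contra huq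
          exact hE u ⟨hup, huq⟩ v ⟨hvq, hvp⟩ hadj
        simp only [hup, hvp, dif_pos, dif_neg, not_false_iff] at heq
        have hmem : u ∈ K := ⟨hu, hup, huq⟩
        have : σ (g ⟨u, hmem⟩) = f ⟨u, hmem⟩ := hσ _
        rw [show c1 ⟨u, ⟨hu, hup⟩⟩ = f ⟨u, hmem⟩ from rfl, ← this] at heq
        have : g ⟨u, hmem⟩ = c2 ⟨v, _⟩ := σ.injective heq
        exact c2.valid (by exact hadj) this
      · have huq : u ∈ Q := (hT hu).resolve_left hup
        have hvq : v ∈ Q := by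
          by_contra hvq
          exact hE v ⟨hvp, hvq⟩ u ⟨huq, hup⟩ hadj.symm
        simp only [hup, hvp, dif_pos, dif_neg, not_false_iff] at heq
        have hmem : v ∈ K := ⟨hv, hvp, hvq⟩
        have : σ (g ⟨v, hmem⟩) = f ⟨v, hmem⟩ := hσ _
        rw [show c1 ⟨v, ⟨hv, hvp⟩⟩ = f ⟨v, hmem⟩ from rfl, ← this] at heq
        have : c2 ⟨u, _⟩ = g ⟨v, hmem⟩ := σ.injective heq
        exact c2.valid (by exact hadj) (this.trans rfl)
      · simp only [hup, hvp, dif_neg, not_false_iff] at heq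
        exact c2.valid (by exact hadj) (σ.injective heq)
  exact (Colorable.chromaticNumber_le ⟨color⟩)

lemma perfect_mono {G : SimpleGraph V} {S S' : Set V} (h : S ⊆ S')
    (hp : IsPerfectOn G S') : IsPerfectOn G S :=
  fun T hT => hp T (hT.trans h)

lemma half_mnpd [Fintype V] (G : SimpleGraph V) (hG : MNPD G)
    (X V1 V2 : Set V) (hX : G.IsClique X)
    (hpart : V1 ∪ V2 = Set.univ \ X) (hd : Disjoint V1 V2)
    (h1 : V1.Nonempty)
    (hanti : ∀ a ∈ V1, ∀ b ∈ V2, ¬ G.Adj a b) :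
    ¬ IsPerfectOn G (X ∪ V1) := by
  intro hperf
  apply hG.1
  intro H _ hHne
  have hV1X : ∀ a ∈ V1, a ∉ X := by
    intro a ha
    have : a ∈ Set.univ \ X := hpart ▸ Set.mem_union_left _ ha
    exact this.2
  have hS2ne : X ∪ V2 ≠ Set.univ := by
    obtain ⟨a, ha⟩ := h1
    intro h
    have : a ∈ X ∪ V2 := h ▸ Set.mem_univ a
    rcases this with h' | h'
    · exact hV1X a ha h'
    · exact hd.ne_of_mem ha h' rfl
  have hPD := hG.2 _ hS2ne
  rcases (H ∩ (X ∪ V2)).eq_empty_or_nonempty with hcase | hcase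
  · -- H ⊆ V1
    have hHV1 : H ⊆ V1 := by
      intro x hx
      have hx2 : x ∈ Set.univ \ X ∨ x ∈ X := by
        by_cases h : x ∈ X
        · exact Or.inr h
        · exact Or.inl ⟨Set.mem_univ x, h⟩
      rcases hx2 with h | h
      · rw [← hpart] at h
        rcases h with h | h
        · exact h
        · exact absurd (Set.mem_inter hx (Set.mem_union_right _ h))
            (hcase ▸ Set.notMem_empty x)
      · exact absurd (Set.mem_inter hx (Set.mem_union_left _ h))
          (hcase ▸ Set.notMem_empty x)
    refine ⟨H, ∅, Set.union_empty H, Set.disjoint_empty _, ?_, ?_⟩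
    · exact perfect_mono (hHV1.trans Set.subset_union_right) hperf
    · rw [omega_empty]
      exact omega_pos G hHne
  · obtain ⟨A₂, B₂, hun, hdis, hA₂p, hB₂⟩ := hPD _ Set.inter_subset_right hcase
    have hA₂sub : A₂ ⊆ H ∩ (X ∪ V2) := hun ▸ Set.subset_union_left
    have hB₂sub : B₂ ⊆ H ∩ (X ∪ V2) := hun ▸ Set.subset_union_right
    refine ⟨(H ∩ V1) ∪ A₂, B₂, ?_, ?_, ?_, ?_⟩
    · -- union equals H
      ext x
      constructor
      · rintro ((⟨hx, _⟩ | hx) | hx)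
        · exact hx
        · exact (hA₂sub hx).1
        · exact (hB₂sub hx).1
      · intro hx
        by_cases hxS : x ∈ X ∪ V2
        · have : x ∈ A₂ ∪ B₂ := hun ▸ Set.mem_inter hx hxS
          rcases this with h | h
          · exact Or.inl (Or.inr h)
          · exact Or.inr h
        · have hx1 : x ∈ V1 := by
            have hxX : x ∉ X := fun h => hxS (Or.inl h)
            have : x ∈ V1 ∪ V2 := hpart ▸ ⟨Set.mem_univ x, hxX⟩
            rcases this with h | h
            · exact h
            · exact absurd (Or.inr h) hxS
          exact Or.inl (Or.inl ⟨hx, hx1⟩)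
    · -- disjoint
      refine Set.disjoint_union_left.2 ⟨?_, hdis⟩
      refine Set.disjoint_left.2 ?_
      rintro x ⟨_, hx1⟩ hxB
      rcases (hB₂sub hxB).2 with h | h
      · exact hV1X x hx1 h
      · exact hd.ne_of_mem hx1 h rfl
    · -- perfection of (H ∩ V1) ∪ A₂ via gluing
      have hA2XA2 : (A₂ ∩ X) ⊆ A₂ := Set.inter_subset_left
      have key : IsPerfectOn G (((H ∩ V1) ∪ (A₂ ∩ X)) ∪ A₂) := by
        apply glue_perfect G _ _ ?_ hA₂p ?_ ?_
        · refine perfect_mono ?_ hperf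
          rintro x (⟨_, hx1⟩ | ⟨_, hx2⟩)
          · exact Or.inr hx1
          · exact Or.inl hx2
        · -- intersection is a clique
          apply hX.subset
          rintro x ⟨(⟨_, hx1⟩ | ⟨_, hxX⟩), hxA⟩
          · rcases (hA₂sub hxA).2 with h | h
            · exact h
            · exact absurd rfl (hd.ne_of_mem hx1 h)
          · exact hxX
        · rintro u ⟨hu, huA⟩ v ⟨hvA, hvP⟩
          have hu1 : u ∈ H ∩ V1 := by
            rcases hu with h | h
            · exact h
            · exact absurd (hA2XA2 h) huA
          have hv2 : v ∈ V2 := by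
            rcases (hA₂sub hvA).2 with h | h
            · exact absurd (Or.inr ⟨hvA, h⟩) hvP
            · exact h
          exact hanti u hu1.2 v hv2
      refine perfect_mono ?_ key
      rintro x (h | h)
      · exact Or.inl (Or.inl h)
      · exact Or.inr h
    · -- omega bound
      exact lt_of_lt_of_le hB₂ (omega_mono G Set.inter_subset_left)


theorem stmt_13 [Fintype V] (G : SimpleGraph V) (hG : MNPD G) (hc : G.Connected)
    (X V1 V2 : Set V) (hX : G.IsClique X)
    (hpart : V1 ∪ V2 = Set.univ \ X) (hd : Disjoint V1 V2)
    (h1 : V1.Nonempty) (h2 : V2.Nonempty)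
    (hanti : ∀ a ∈ V1, ∀ b ∈ V2, ¬ G.Adj a b) :
    ¬ IsPerfectOn G (X ∪ V1) ∧ ¬ IsPerfectOn G (X ∪ V2) := by
  constructor
  · exact half_mnpd G hG X V1 V2 hX hpart hd h1 hanti
  · exact half_mnpd G hG X V2 V1 hX (Set.union_comm V1 V2 ▸ hpart) hd.symm h2
      (fun a ha b hb hab => hanti b hb a ha hab.symm)
end
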